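/- A loop with self-map σ is a σ-M-loop (satisfies (x·y)·(z·σ(x)) = (x·(y·z))·σ(x)) if and only if it is both a σ-generalized left Bol loop and a σ-generalized right Bol loop. -/

import Mathlib

/-- A loop: a magma with two-sided identity whose translations are bijections. -/
structure IsLoop (Q : Type*) [Mul Q] [One Q] : Prop where
  one_mul : ∀ x : Q, 1 * x = x
  mul_one : ∀ x : Q, x * 1 = x
  lbij : ∀ x : Q, Function.Bijective (fun y : Q => x * y)
  rbij : ∀ x : Q, Function.Bijective (fun y : Q => y * x)

/-- Left translation `L x : y ↦ x * y` as a permutation. -/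
noncomputable def Lt {Q : Type*} [Mul Q] [One Q] (h : IsLoop Q) (x : Q) : Equiv.Perm Q :=
  Equiv.ofBijective _ (h.lbij x)

/-- Right translation `R x : y ↦ y * x` as a permutation. -/
noncomputable def Rt {Q : Type*} [Mul Q] [One Q] (h : IsLoop Q) (x : Q) : Equiv.Perm Q :=
  Equiv.ofBijective _ (h.rbij x)

/-- The right inverse `x^ρ`, the unique solution of `x * x^ρ = 1`. -/
noncomputable def rinv {Q : Type*} [Mul Q] [One Q] (h : IsLoop Q) (x : Q) : Q :=
  (Lt h x).symm 1

/-- The left inverse `x^λ`, the unique solution of `x^λ * x = 1`. -/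
noncomputable def linv {Q : Type*} [Mul Q] [One Q] (h : IsLoop Q) (x : Q) : Q :=
  (Rt h x).symm 1

/-- σ-generalized (right) Bol identity. -/
def RightBol {Q : Type*} [Mul Q] (σ : Q → Q) : Prop :=
  ∀ x y z : Q, ((x * y) * z) * σ y = x * ((y * z) * σ y)

/-- σ-generalized left Bol identity. -/
def LeftBol {Q : Type*} [Mul Q] (σ : Q → Q) : Prop :=
  ∀ x y z : Q, σ y * (z * (y * x)) = (σ y * (z * y)) * x

/-- `(A,B,C)` is an autotopism: `A x * B y = C (x * y)`. -/
def Autotopism {Q : Type*} [Mul Q] (A B C : Equiv.Perm Q) : Prop :=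
  ∀ x y : Q, A x * B y = C (x * y)

/-! Both identities say that certain triples of translations are autotopisms: the M-identity
says that `(L x, R (σ x), R (σ x) * L x)` is one, and in the presence of two-sided inverses `x⁻¹`
the right Bol identity says the same of `(R x⁻¹, R (σ x) * L x, R (σ x))`. Either side of the
equivalence forces the inverse property, and in an IP loop, with `J` the inversion map,
autotopisms `(A, B, C)` can be moved around: `(J A J, C, B)`, `(C, J B J, A)`,
`(J B J, J A J, J C J)` and `(A⁻¹, B⁻¹, C⁻¹)` are autotopisms again. The first of these moves
exchanges the two triples above, so M-loops are exactly the right Bol IP loops. A chain of three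
moves turns the M-triple into `(R x * L (σ x), L x⁻¹, L (σ x))`, which is the left Bol identity
once one knows that `L (σ x)` and `R x` commute; that follows from flexibility
`x (z σx) = (x z) σx`, i.e. the M-identity at `y = 1`, conjugated by `J`. -/

def MLoop {Q : Type*} [Mul Q] (σ : Q → Q) : Prop :=
  ∀ x y z : Q, (x * y) * (z * σ x) = (x * (y * z)) * σ x

structure IsIPLoop (Q : Type*) [Mul Q] [One Q] (ι : Q → Q) : Prop extends IsLoop Q where
  inv_mul_cancel_left : ∀ x y : Q, ι x * (x * y) = y
  mul_inv_cancel_right : ∀ x y : Q, y * x * ι x = y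

theorem Autotopism.inv {Q : Type*} [Mul Q] {A B C : Equiv.Perm Q} (hABC : Autotopism A B C) :
    Autotopism A⁻¹ B⁻¹ C⁻¹ := fun x y => by
  rw [Equiv.Perm.eq_inv_iff_eq, ← hABC]
  simp

section Loop

variable {Q : Type*} [Mul Q] [One Q]

namespace IsLoop

theorem mul_left_cancel (h : IsLoop Q) {x a b : Q} (e : x * a = x * b) : a = b :=
  (h.lbij x).1 e

theorem mul_right_cancel (h : IsLoop Q) {x a b : Q} (e : a * x = b * x) : a = b :=
  (h.rbij x).1 e

theorem mul_rinv (h : IsLoop Q) (x : Q) : x * rinv h x = 1 :=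
  (Lt h x).apply_symm_apply 1

theorem linv_mul (h : IsLoop Q) (x : Q) : linv h x * x = 1 :=
  (Rt h x).apply_symm_apply 1

@[simp]
theorem Lt_apply (h : IsLoop Q) (x y : Q) : Lt h x y = x * y :=
  rfl

@[simp]
theorem Rt_apply (h : IsLoop Q) (x y : Q) : Rt h x y = y * x :=
  rfl

theorem inv_inv_of_inv_mul_cancel_left (h : IsLoop Q) {ι : Q → Q}
    (hι : ∀ x y : Q, ι x * (x * y) = y) (x : Q) : ι (ι x) = x := by
  have hinv : ι x * x = 1 := by simpa only [h.mul_one] using hι x 1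
  simpa only [hinv, h.mul_one] using hι (ι x) x

end IsLoop

namespace IsIPLoop

variable {ι : Q → Q}

theorem inv_inv (hQ : IsIPLoop Q ι) (x : Q) : ι (ι x) = x :=
  hQ.toIsLoop.inv_inv_of_inv_mul_cancel_left hQ.inv_mul_cancel_left x

theorem mul_inv_cancel_left (hQ : IsIPLoop Q ι) (x y : Q) : x * (ι x * y) = y := by
  simpa only [hQ.inv_inv] using hQ.inv_mul_cancel_left (ι x) y

theorem inv_mul_cancel_right (hQ : IsIPLoop Q ι) (x y : Q) : y * ι x * x = y := by
  simpa only [hQ.inv_inv] using hQ.mul_inv_cancel_right (ι x) y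

theorem inv_mul_rev (hQ : IsIPLoop Q ι) (x y : Q) : ι (x * y) = ι y * ι x := by
  have hx : ι (x * y) * x = ι y := by
    simpa only [hQ.mul_inv_cancel_right] using hQ.inv_mul_cancel_left (x * y) (ι y)
  rw [← hx, hQ.mul_inv_cancel_right]

theorem of_inv_mul_rev (h : IsLoop Q) (hι : ∀ x y : Q, ι x * (x * y) = y)
    (hrev : ∀ x y : Q, ι (x * y) = ι y * ι x) : IsIPLoop Q ι := by
  have hinv : Function.Involutive ι := h.inv_inv_of_inv_mul_cancel_left hι
  refine ⟨h, hι, fun x y => hinv.injective ?_⟩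
  rw [hrev, hrev]
  exact hι (ι x) (ι y)

def invPerm (hQ : IsIPLoop Q ι) : Equiv.Perm Q :=
  Function.Involutive.toPerm ι hQ.inv_inv

@[simp]
theorem conj_invPerm_apply (hQ : IsIPLoop Q ι) (X : Equiv.Perm Q) (x : Q) :
    MulAut.conj hQ.invPerm X x = ι (X (ι x)) := by
  have hJ : hQ.invPerm⁻¹ = hQ.invPerm :=
    Function.Involutive.symm_eq_self_of_involutive _ hQ.inv_inv
  rw [MulAut.conj_apply, Equiv.Perm.mul_apply, Equiv.Perm.mul_apply, hJ]
  rfl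

theorem conj_Lt (hQ : IsIPLoop Q ι) (a : Q) :
    MulAut.conj hQ.invPerm (Lt hQ.toIsLoop a) = Rt hQ.toIsLoop (ι a) := by
  ext x
  simp only [conj_invPerm_apply, IsLoop.Lt_apply, IsLoop.Rt_apply, hQ.inv_mul_rev, hQ.inv_inv]

theorem conj_Rt (hQ : IsIPLoop Q ι) (a : Q) :
    MulAut.conj hQ.invPerm (Rt hQ.toIsLoop a) = Lt hQ.toIsLoop (ι a) := by
  ext x
  simp only [conj_invPerm_apply, IsLoop.Lt_apply, IsLoop.Rt_apply, hQ.inv_mul_rev, hQ.inv_inv]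

theorem Lt_inv (hQ : IsIPLoop Q ι) (a : Q) : (Lt hQ.toIsLoop a)⁻¹ = Lt hQ.toIsLoop (ι a) := by
  ext x
  rw [Equiv.Perm.inv_eq_iff_eq, IsLoop.Lt_apply, IsLoop.Lt_apply, hQ.mul_inv_cancel_left]

theorem Rt_inv (hQ : IsIPLoop Q ι) (a : Q) : (Rt hQ.toIsLoop a)⁻¹ = Rt hQ.toIsLoop (ι a) := by
  ext x
  rw [Equiv.Perm.inv_eq_iff_eq, IsLoop.Rt_apply, IsLoop.Rt_apply, hQ.inv_mul_cancel_right]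

end IsIPLoop

namespace Autotopism

variable {A B C : Equiv.Perm Q} {ι : Q → Q}

theorem swap₂₃ (hQ : IsIPLoop Q ι) (hABC : Autotopism A B C) :
    Autotopism (MulAut.conj hQ.invPerm A) C B := by
  intro x y
  calc ι (A (ι x)) * C y = ι (A (ι x)) * (A (ι x) * B (x * y)) := by
        rw [hABC, hQ.inv_mul_cancel_left]
    _ = B (x * y) := hQ.inv_mul_cancel_left _ _

theorem swap₁₃ (hQ : IsIPLoop Q ι) (hABC : Autotopism A B C) :
    Autotopism C (MulAut.conj hQ.invPerm B) A := by
  intro x y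
  calc C x * ι (B (ι y)) = A (x * y) * B (ι y) * ι (B (ι y)) := by
        rw [hABC, hQ.mul_inv_cancel_right]
    _ = A (x * y) := hQ.mul_inv_cancel_right _ _

theorem conj (hQ : IsIPLoop Q ι) (hABC : Autotopism A B C) :
    Autotopism (MulAut.conj hQ.invPerm B) (MulAut.conj hQ.invPerm A)
      (MulAut.conj hQ.invPerm C) := by
  intro x y
  simp only [IsIPLoop.conj_invPerm_apply]
  rw [← hQ.inv_mul_rev, hABC, ← hQ.inv_mul_rev]

end Autotopism

theorem mLoop_iff_autotopism (h : IsLoop Q) (σ : Q → Q) :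
    MLoop σ ↔ ∀ x, Autotopism (Lt h x) (Rt h (σ x)) (Rt h (σ x) * Lt h x) :=
  Iff.rfl

namespace IsIPLoop

variable {ι : Q → Q}

theorem rightBol_iff_autotopism (hQ : IsIPLoop Q ι) (σ : Q → Q) :
    RightBol σ ↔ ∀ y, Autotopism (Rt hQ.toIsLoop (ι y))
      (Rt hQ.toIsLoop (σ y) * Lt hQ.toIsLoop y) (Rt hQ.toIsLoop (σ y)) := by
  refine ⟨fun hR y x z => ?_, fun hA x y z => ?_⟩
  · show x * ι y * (y * z * σ y) = x * z * σ y
    rw [← hR, hQ.inv_mul_cancel_right]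
  · simpa only [Equiv.Perm.mul_apply, IsLoop.Lt_apply, IsLoop.Rt_apply, hQ.mul_inv_cancel_right]
      using (hA y (x * y) z).symm

theorem mLoop_iff_rightBol (hQ : IsIPLoop Q ι) (σ : Q → Q) : MLoop σ ↔ RightBol σ := by
  rw [mLoop_iff_autotopism hQ.toIsLoop, hQ.rightBol_iff_autotopism]
  refine forall_congr' fun y => ⟨fun hy => ?_, fun hy => ?_⟩
  · simpa only [hQ.conj_Lt] using hy.swap₂₃ hQ
  · simpa only [hQ.conj_Rt, hQ.inv_inv] using hy.swap₂₃ hQ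

theorem commute_Rt_Lt_of_mLoop (hQ : IsIPLoop Q ι) {σ : Q → Q} (hM : MLoop σ) (x : Q) :
    Commute (Rt hQ.toIsLoop x) (Lt hQ.toIsLoop (σ x)) := by
  have hflex : Commute (Lt hQ.toIsLoop x) (Rt hQ.toIsLoop (σ x)) := Equiv.ext fun z => by
    simpa only [Equiv.Perm.mul_apply, IsLoop.Lt_apply, IsLoop.Rt_apply, hQ.mul_one, hQ.one_mul]
      using hM x 1 z
  simpa only [hQ.conj_Lt, hQ.conj_Rt, hQ.Lt_inv, hQ.Rt_inv, hQ.inv_inv]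
    using (hflex.map (MulAut.conj hQ.invPerm)).inv_inv

theorem leftBol_of_mLoop (hQ : IsIPLoop Q ι) {σ : Q → Q} (hM : MLoop σ) : LeftBol σ := by
  intro x y z
  have hβ := (((mLoop_iff_autotopism hQ.toIsLoop σ).1 hM y).inv.conj hQ).swap₁₃ hQ
  -- this turns `hβ` into `Autotopism (L (σ y) * R y) (L y⁻¹) (L (σ y))`
  simp only [mul_inv_rev, map_mul, hQ.Lt_inv, hQ.Rt_inv, hQ.conj_Lt, hQ.conj_Rt,
    hQ.inv_inv, (hQ.commute_Rt_Lt_of_mLoop hM y).eq] at hβ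
  simpa only [Equiv.Perm.mul_apply, IsLoop.Lt_apply, IsLoop.Rt_apply, hQ.inv_mul_cancel_left]
    using (hβ z (y * x)).symm

end IsIPLoop

theorem isIPLoop_rinv_of_mLoop (h : IsLoop Q) {σ : Q → Q} (hM : MLoop σ) :
    IsIPLoop Q (rinv h) := by
  have hcancel : ∀ x z : Q, x * (rinv h x * z) = z := fun x z =>
    (h.mul_right_cancel (by simpa only [h.mul_rinv, h.one_mul] using hM x (rinv h x) z)).symm
  refine IsIPLoop.of_inv_mul_rev h (fun x z => h.mul_left_cancel (hcancel x (x * z))) fun y a => ?_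
  -- `e : (y a) ((a⁻¹ y⁻¹) σy) = σy`, and `hcancel` writes `σy` as `(y a) ((y a)⁻¹ σy)`
  have e := hM y a (rinv h a * rinv h y)
  rw [hcancel a, h.mul_rinv, h.one_mul] at e
  exact (h.mul_right_cancel (h.mul_left_cancel (e.trans (hcancel (y * a) (σ y)).symm))).symm

theorem isIPLoop_rinv_of_bol (h : IsLoop Q) {σ : Q → Q} (hL : LeftBol σ) (hR : RightBol σ) :
    IsIPLoop Q (rinv h) := by
  have hlinv : ∀ x y : Q, linv h x * (x * y) = y := fun x y =>
    h.mul_left_cancel (by simpa only [h.linv_mul, h.mul_one] using hL y x (linv h x))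
  have hlinv_eq : ∀ x : Q, linv h x = rinv h x := fun x => by
    simpa only [h.mul_rinv, h.mul_one] using hlinv x (rinv h x)
  refine ⟨h, fun x y => hlinv_eq x ▸ hlinv x y, fun x y => h.mul_right_cancel (x := σ x) ?_⟩
  simpa only [h.mul_rinv, h.one_mul] using hR y x (rinv h x)

end Loop

/-- A loop is a σ-M-loop iff it is both a σ-generalized left Bol loop
and a σ-generalized right Bol loop. -/
theorem stmt8 {Q : Type*} [Mul Q] [One Q] (h : IsLoop Q) (σ : Q → Q) :
    (∀ x y z : Q, (x * y) * (z * σ x) = (x * (y * z)) * σ x) ↔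
      (LeftBol σ ∧ RightBol σ) := by
  constructor
  · intro hM
    have hQ := isIPLoop_rinv_of_mLoop h hM
    exact ⟨hQ.leftBol_of_mLoop hM, (hQ.mLoop_iff_rightBol σ).1 hM⟩
  · rintro ⟨hL, hR⟩
    exact ((isIPLoop_rinv_of_bol h hL hR).mLoop_iff_rightBol σ).2 hR
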